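/- arXiv:2605.11313 — 4 statements merged into one kernel-verified Lean document; each statement's English description precedes it below -/
import Mathlib

section
/- For all real numbers x, y with 0 ≤ y ≤ x, the standard normal tail probabilities satisfy (1 − Φ(y))/(1 − Φ(x)) ≤ exp( (x − y) · ((x + y)/2 + 1) ). -/
open MeasureTheory ProbabilityTheory Real Set Filter

namespace GaussTail

/-- The standard normal pdf in explicit form. -/
lemma pdf_eq : gaussianPDFReal 0 1 = fun s : ℝ => (Real.sqrt (2 * π))⁻¹ * Real.exp (- s ^ 2 / 2) := by
  ext s
  simp [gaussianPDFReal]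

lemma pdf_cont : Continuous (gaussianPDFReal 0 1) := by
  rw [pdf_eq]
  continuity

lemma pdf_hasDeriv (s : ℝ) :
    HasDerivAt (gaussianPDFReal 0 1) (-s * gaussianPDFReal 0 1 s) s := by
  rw [pdf_eq]
  have h1 : HasDerivAt (fun t : ℝ => - t ^ 2 / 2) (-s) s := by
    have := ((hasDerivAt_pow 2 s).neg).div_const 2
    refine this.congr_deriv ?_
    ring
  have := (h1.exp).const_mul (Real.sqrt (2 * π))⁻¹
  refine this.congr_deriv ?_
  ring

noncomputable def T (t : ℝ) : ℝ := ∫ s in Set.Ioi t, gaussianPDFReal 0 1 s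

lemma intOn (s : Set ℝ) : IntegrableOn (gaussianPDFReal 0 1) s :=
  (integrable_gaussianPDFReal 0 1).integrableOn

lemma tail_eq (t : ℝ) : 1 - ((gaussianReal 0 1) (Set.Iic t)).toReal = T t := by
  rw [gaussianReal_apply_eq_integral 0 one_ne_zero (Set.Iic t),
    ENNReal.toReal_ofReal (integral_nonneg fun s => gaussianPDFReal_nonneg 0 1 s)]
  have h := intervalIntegral.integral_Iic_add_Ioi (f := gaussianPDFReal 0 1) (μ := volume) (b := t)
    (intOn _) (intOn _)
  rw [integral_gaussianPDFReal_eq_one 0 one_ne_zero] at h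
  rw [T]
  linarith

lemma T_eq (u : ℝ) : T u = T 0 - ∫ s in (0:ℝ)..u, gaussianPDFReal 0 1 s := by
  have h1 := intervalIntegral.integral_Iic_add_Ioi (f := gaussianPDFReal 0 1) (μ := volume) (b := u)
    (intOn _) (intOn _)
  have h2 := intervalIntegral.integral_Iic_add_Ioi (f := gaussianPDFReal 0 1) (μ := volume) (b := (0:ℝ))
    (intOn _) (intOn _)
  have h3 := intervalIntegral.integral_Iic_sub_Iic (f := gaussianPDFReal 0 1) (μ := volume) (a := (0:ℝ)) (b := u)
    (intOn _) (intOn _)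
  rw [T, T]
  linarith

lemma T_hasDeriv (t : ℝ) : HasDerivAt T (-(gaussianPDFReal 0 1 t)) t := by
  have h : HasDerivAt (fun u => ∫ s in (0:ℝ)..u, gaussianPDFReal 0 1 s)
      (gaussianPDFReal 0 1 t) t :=
    intervalIntegral.integral_hasDerivAt_right
      ((integrable_gaussianPDFReal 0 1).intervalIntegrable)
      (pdf_cont.stronglyMeasurable.stronglyMeasurableAtFilter)
      pdf_cont.continuousAt
  have h2 := (hasDerivAt_const t (T 0)).sub h
  simp only [zero_sub] at h2
  have hfun : (fun u => T 0 - ∫ s in (0:ℝ)..u, gaussianPDFReal 0 1 s) = T :=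
    funext fun u => (T_eq u).symm
  rw [← hfun]; exact h2

lemma pdf_tendsto_zero : Tendsto (gaussianPDFReal 0 1) atTop (nhds 0) := by
  rw [pdf_eq]
  rw [show (0:ℝ) = (Real.sqrt (2 * π))⁻¹ * 0 by ring]
  refine Tendsto.const_mul _ ?_
  refine Real.tendsto_exp_atBot.comp ?_
  have h : Tendsto (fun s : ℝ => s ^ 2 / 2) atTop atTop :=
    (tendsto_pow_atTop (two_ne_zero)).atTop_div_const two_pos
  have h2 : Tendsto (Neg.neg ∘ fun s : ℝ => s ^ 2 / 2) atTop atBot :=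
    tendsto_neg_atTop_atBot.comp h
  have heq : (fun s : ℝ => - s ^ 2 / 2) = Neg.neg ∘ fun s : ℝ => s ^ 2 / 2 := by
    funext s; simp [Function.comp]; ring
  rw [heq]
  exact h2

/-- key lemma: `φ t ≤ (t+1) * T t` for `t ≥ 0`. -/
lemma key (t : ℝ) (ht : 0 ≤ t) : gaussianPDFReal 0 1 t ≤ (t + 1) * T t := by
  set f := gaussianPDFReal 0 1 with hf
  -- auxiliary function g s = - f s / (s+1)
  set g : ℝ → ℝ := fun s => - f s / (s + 1) with hg
  set g' : ℝ → ℝ := fun s => f s * ((s ^ 2 + s + 1) / (s + 1) ^ 2) with hg'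
  have hderiv : ∀ s ∈ Set.Ici t, HasDerivAt g (g' s) s := by
    intro s hs
    have hs0 : (0:ℝ) ≤ s := le_trans ht hs
    have hs1 : s + 1 ≠ 0 := by positivity
    have hd : HasDerivAt (fun u : ℝ => - f u) (- (-s * f s)) s := (pdf_hasDeriv s).neg
    have := hd.div (hasDerivAt_id s |>.add_const 1) hs1
    refine this.congr_deriv ?_
    show _ = f s * ((s ^ 2 + s + 1) / (s + 1) ^ 2)
    simp only [id]
    field_simp
    ring
  have hle : ∀ s ∈ Set.Ioi t, g' s ≤ f s := by
    intro s hs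
    have hs0 : (0:ℝ) ≤ s := le_trans ht (le_of_lt hs)
    have hfpos : 0 ≤ f s := gaussianPDFReal_nonneg 0 1 s
    have hq : (s ^ 2 + s + 1) / (s + 1) ^ 2 ≤ 1 := by
      rw [div_le_one (by positivity)]
      nlinarith
    calc f s * ((s ^ 2 + s + 1) / (s + 1) ^ 2) ≤ f s * 1 := by
          exact mul_le_mul_of_nonneg_left hq hfpos
      _ = f s := by ring
  have hnonneg : ∀ s ∈ Set.Ioi t, 0 ≤ g' s := by
    intro s hs
    have hs0 : (0:ℝ) ≤ s := le_trans ht (le_of_lt hs)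
    have : 0 ≤ f s := gaussianPDFReal_nonneg 0 1 s
    have : (0:ℝ) ≤ (s ^ 2 + s + 1) / (s + 1) ^ 2 := by positivity
    exact mul_nonneg (gaussianPDFReal_nonneg 0 1 s) this
  have hmeas : AEStronglyMeasurable g' (volume.restrict (Set.Ioi t)) := by
    refine (Measurable.aestronglyMeasurable ?_)
    exact (measurable_gaussianPDFReal 0 1).mul
      ((measurable_id.pow_const 2 |>.add measurable_id |>.add_const 1).div
        ((measurable_id.add_const 1).pow_const 2))
  have hint : IntegrableOn g' (Set.Ioi t) := by
    refine Integrable.mono (intOn (Set.Ioi t)) hmeas ?_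
    filter_upwards [ae_restrict_mem measurableSet_Ioi] with s hs
    rw [Real.norm_eq_abs, Real.norm_eq_abs, abs_of_nonneg (hnonneg s hs),
      abs_of_nonneg (gaussianPDFReal_nonneg 0 1 s)]
    exact hle s hs
  have htend : Tendsto g atTop (nhds 0) := by
    have h1 : Tendsto (fun s : ℝ => (s + 1)⁻¹) atTop (nhds 0) := by
      refine Tendsto.inv_tendsto_atTop ?_
      exact tendsto_atTop_add_const_right _ 1 tendsto_id
    have := (pdf_tendsto_zero.neg.mul h1)
    simpa [hg, div_eq_mul_inv] using this
  have heq : ∫ s in Set.Ioi t, g' s = 0 - g t :=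
    MeasureTheory.integral_Ioi_of_hasDerivAt_of_tendsto'
      (fun s hs => hderiv s hs) hint htend
  have hgt : 0 - g t = f t / (t + 1) := by
    simp only [hg]
    ring
  have hTineq : f t / (t + 1) ≤ T t := by
    rw [← hgt, ← heq, T]
    exact setIntegral_mono_on hint (intOn _) measurableSet_Ioi hle
  have ht1 : (0:ℝ) < t + 1 := by linarith
  calc f t = (t + 1) * (f t / (t + 1)) := by field_simp
    _ ≤ (t + 1) * T t := by exact mul_le_mul_of_nonneg_left hTineq (le_of_lt ht1)

lemma T_pos (t : ℝ) : 0 < T t := by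
  rw [T, ]
  rw [setIntegral_pos_iff_support_of_nonneg_ae
    (ae_of_all _ fun s => gaussianPDFReal_nonneg 0 1 s) (intOn _)]
  have hsupp : Function.support (gaussianPDFReal 0 1) = Set.univ := by
    ext s
    simp [Function.mem_support, ne_of_gt (gaussianPDFReal_pos 0 1 s one_ne_zero)]
  rw [hsupp, Set.univ_inter]
  simp [Real.volume_Ioi]

noncomputable def G (t : ℝ) : ℝ := T t * Real.exp (t ^ 2 / 2 + t)

lemma G_hasDeriv (t : ℝ) :
    HasDerivAt G (Real.exp (t ^ 2 / 2 + t) * ((t + 1) * T t - gaussianPDFReal 0 1 t)) t := by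
  have h1 : HasDerivAt (fun u : ℝ => u ^ 2 / 2 + u) (t + 1) t := by
    have := ((hasDerivAt_pow 2 t).div_const 2).add (hasDerivAt_id t)
    refine this.congr_deriv ?_
    ring
  have h2 := h1.exp
  have := (T_hasDeriv t).mul h2
  refine this.congr_deriv ?_
  ring

lemma G_mono : MonotoneOn G (Set.Ici 0) := by
  refine monotoneOn_of_deriv_nonneg (convex_Ici 0)
    (fun t _ => (G_hasDeriv t).continuousAt.continuousWithinAt)
    (fun t _ => (G_hasDeriv t).differentiableAt.differentiableWithinAt) ?_
  intro t ht
  rw [interior_Ici] at ht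
  rw [(G_hasDeriv t).deriv]
  have hkey := key t (le_of_lt ht)
  have := Real.exp_pos (t ^ 2 / 2 + t)
  nlinarith

end GaussTail

/-- For `0 ≤ y ≤ x`, the standard normal tails satisfy
`(1 - Φ(y))/(1 - Φ(x)) ≤ exp((x - y)((x + y)/2 + 1))`. -/
theorem gaussian_tail_ratio_bound (x y : ℝ) (hy : 0 ≤ y) (hxy : y ≤ x) :
    (1 - ((gaussianReal 0 1) (Set.Iic y)).toReal) /
      (1 - ((gaussianReal 0 1) (Set.Iic x)).toReal) ≤
      Real.exp ((x - y) * ((x + y) / 2 + 1)) := by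
  rw [GaussTail.tail_eq, GaussTail.tail_eq]
  have hx : (0:ℝ) ≤ x := le_trans hy hxy
  have hG := GaussTail.G_mono hy hx hxy
  have hTx := GaussTail.T_pos x
  have hTy := GaussTail.T_pos y
  rw [div_le_iff₀ hTx]
  have heq : Real.exp ((x - y) * ((x + y) / 2 + 1)) * GaussTail.T x
      = GaussTail.G x / Real.exp (y ^ 2 / 2 + y) := by
    have hexp : Real.exp ((x - y) * ((x + y) / 2 + 1)) * Real.exp (y ^ 2 / 2 + y)
        = Real.exp (x ^ 2 / 2 + x) := by
      rw [← Real.exp_add]; congr 1; ring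
    rw [GaussTail.G, eq_div_iff (Real.exp_pos (y ^ 2 / 2 + y)).ne']
    linear_combination GaussTail.T x * hexp
  rw [heq, le_div_iff₀ (Real.exp_pos _)]
  calc GaussTail.T y * Real.exp (y ^ 2 / 2 + y) = GaussTail.G y := rfl
    _ ≤ GaussTail.G x := hG
end

section
/- Let t > 0 and let n > k ≥ 0 be integers with m = n − k. Let y₁, …, y_k ∈ [0, t] be fixed points and let X₁, …, X_m be independent random variables, each uniformly distributed on [0, t]. Let M be the ⌈n/2⌉-th smallest of the n values y₁, …, y_k, X₁, …, X_m. Then for every δ > 0 with δ/t > k/(2m), P(|M − t/2| ≥ δ) ≤ 2 · exp(−2m · (δ/t − k/(2m))²). -/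
open MeasureTheory ProbabilityTheory Real Finset

/-- The `j`-th smallest of the values `z 0, …, z (n-1)` (for `1 ≤ j ≤ n`). -/
noncomputable def orderStat {n : ℕ} (j : ℕ) (z : Fin n → ℝ) : ℝ :=
  sInf {x : ℝ | j ≤ (Finset.univ.filter fun i => z i ≤ x).card}

section OrderStat

lemma os_exists_le {n j : ℕ} (z : Fin n → ℝ) (hj : 1 ≤ j) {x : ℝ}
    (hx : x ∈ {x : ℝ | j ≤ (Finset.univ.filter fun i => z i ≤ x).card}) :
    ∃ i, z i ≤ x := by
  simp only [Set.mem_setOf_eq] at hx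
  have : 0 < (Finset.univ.filter fun i => z i ≤ x).card := lt_of_lt_of_le hj hx
  obtain ⟨i, hi⟩ := Finset.card_pos.mp this
  exact ⟨i, (Finset.mem_filter.mp hi).2⟩

lemma orderStat_lt {n j : ℕ} (z : Fin n → ℝ) (hj : 1 ≤ j) (c : ℝ)
    (hcard : j ≤ (Finset.univ.filter fun i => z i < c).card) :
    orderStat j z < c := by
  set F := Finset.univ.filter fun i => z i < c with hF
  have hFne : F.Nonempty := Finset.card_pos.mp (lt_of_lt_of_le hj hcard)
  set x := F.sup' hFne z with hxdef
  have hxc : x < c := (Finset.sup'_lt_iff hFne).2 fun i hi => (Finset.mem_filter.mp hi).2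
  have hxS : x ∈ {x : ℝ | j ≤ (Finset.univ.filter fun i => z i ≤ x).card} := by
    simp only [Set.mem_setOf_eq]
    refine le_trans hcard (Finset.card_le_card ?_)
    intro i hi
    exact Finset.mem_filter.mpr ⟨Finset.mem_univ i, Finset.le_sup' z hi⟩
  obtain ⟨i₀, _⟩ := hFne
  have hbdd : BddBelow {x : ℝ | j ≤ (Finset.univ.filter fun i => z i ≤ x).card} := by
    refine ⟨Finset.univ.inf' ⟨i₀, Finset.mem_univ i₀⟩ z, fun x' hx' => ?_⟩
    obtain ⟨i, hi⟩ := os_exists_le z hj hx'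
    exact le_trans (Finset.inf'_le z (Finset.mem_univ i)) hi
  exact lt_of_le_of_lt (csInf_le hbdd hxS) hxc

lemma le_count_of_orderStat_le {n j : ℕ} (z : Fin n → ℝ) (hj : 1 ≤ j) (c : ℝ)
    (hne : {x : ℝ | j ≤ (Finset.univ.filter fun i => z i ≤ x).card}.Nonempty)
    (h : orderStat j z ≤ c) :
    j ≤ (Finset.univ.filter fun i => z i ≤ c).card := by
  by_contra hlt
  push_neg at hlt
  set F' := Finset.univ.filter fun i => c < z i with hF'
  by_cases hF'ne : F'.Nonempty
  · set c' := F'.inf' hF'ne z with hc'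
    have hcc' : c < c' := (Finset.lt_inf'_iff hF'ne).2 fun i hi => (Finset.mem_filter.mp hi).2
    have hlb : ∀ x ∈ {x : ℝ | j ≤ (Finset.univ.filter fun i => z i ≤ x).card}, c' ≤ x := by
      intro x hx
      by_contra hxc'
      push_neg at hxc'
      have hsub : (Finset.univ.filter fun i => z i ≤ x) ⊆
          Finset.univ.filter fun i => z i ≤ c := by
        intro i hi
        have hzi : z i ≤ x := (Finset.mem_filter.mp hi).2
        refine Finset.mem_filter.mpr ⟨Finset.mem_univ i, ?_⟩
        by_contra hzc
        push_neg at hzc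
        have : c' ≤ z i := Finset.inf'_le z (Finset.mem_filter.mpr ⟨Finset.mem_univ i, hzc⟩)
        linarith
      simp only [Set.mem_setOf_eq] at hx
      have := le_trans hx (Finset.card_le_card hsub)
      omega
    have : c' ≤ orderStat j z := le_csInf hne hlb
    linarith
  · obtain ⟨x, hx⟩ := hne
    have hall : ∀ i, z i ≤ c := by
      intro i
      by_contra hzc
      push_neg at hzc
      exact hF'ne ⟨i, Finset.mem_filter.mpr ⟨Finset.mem_univ i, hzc⟩⟩
    simp only [Set.mem_setOf_eq] at hx
    have hsub : (Finset.univ.filter fun i => z i ≤ x) ⊆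
        Finset.univ.filter fun i => z i ≤ c :=
      fun i hi => Finset.mem_filter.mpr ⟨Finset.mem_univ i, hall i⟩
    have := le_trans hx (Finset.card_le_card hsub)
    omega

lemma orderStat_mem_Icc {n j : ℕ} (z : Fin n → ℝ) (hj : 1 ≤ j) (hjn : j ≤ n)
    (t : ℝ) (hz : ∀ i, z i ∈ Set.Icc 0 t) :
    orderStat j z ∈ Set.Icc 0 t := by
  have htS : t ∈ {x : ℝ | j ≤ (Finset.univ.filter fun i => z i ≤ x).card} := by
    simp only [Set.mem_setOf_eq]
    have : (Finset.univ.filter fun i => z i ≤ t) = Finset.univ := by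
      refine Finset.filter_true_of_mem fun i _ => (hz i).2
    rw [this]
    simpa using hjn
  have hlb : ∀ x ∈ {x : ℝ | j ≤ (Finset.univ.filter fun i => z i ≤ x).card}, (0:ℝ) ≤ x := by
    intro x hx
    obtain ⟨i, hi⟩ := os_exists_le z hj hx
    exact le_trans (hz i).1 hi
  constructor
  · exact le_csInf ⟨t, htS⟩ hlb
  · exact csInf_le ⟨0, hlb⟩ htS

lemma count_append {k m : ℕ} (y : Fin k → ℝ) (x : Fin m → ℝ) (P : ℝ → Prop)
    [DecidablePred P] :
    (Finset.univ.filter fun i : Fin (k + m) => P (Fin.append y x i)).card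
      = (Finset.univ.filter fun i : Fin k => P (y i)).card
        + (Finset.univ.filter fun i : Fin m => P (x i)).card := by
  simp only [Finset.card_filter]
  rw [Fin.sum_univ_add]
  simp [Fin.append_left, Fin.append_right]

end OrderStat

lemma hoeff_aux (p : ℝ) (hp0 : 0 ≤ p) (hp1 : p ≤ 1) (s : ℝ) :
    1 - p + p * exp s ≤ exp (s * p + s ^ 2 / 8) := by
  set h : ℝ → ℝ := fun u => 1 - p + p * exp u with hh
  have hpos : ∀ u, 0 < h u := by
    intro u
    rcases eq_or_lt_of_le hp1 with h1 | h1
    · simp [hh, ← h1]; positivity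
    · have : 0 < 1 - p := by linarith
      have : 0 ≤ p * exp u := by positivity
      simp only [hh]; linarith
  set g : ℝ → ℝ := fun u => u * p + u ^ 2 / 8 - log (h u) with hg
  set g' : ℝ → ℝ := fun u => p + u / 4 - p * exp u / h u with hg'
  have hd : ∀ u, HasDerivAt g (g' u) u := by
    intro u
    have h1 : HasDerivAt h (p * exp u) u := by
      exact ((Real.hasDerivAt_exp u).const_mul p).const_add (1 - p)
    have h2 : HasDerivAt (fun u => log (h u)) (p * exp u / h u) u :=
      h1.log (hpos u).ne'
    have h3 : HasDerivAt (fun u : ℝ => u * p + u ^ 2 / 8) (p + u / 4) u := by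
      have := ((hasDerivAt_id u).mul_const p).add
        (((hasDerivAt_pow 2 u)).div_const 8)
      exact this.congr_deriv (by norm_num; ring)
    exact h3.sub h2
  have hd' : ∀ u, HasDerivAt g' (1/4 - (p * exp u / h u) * (1 - p * exp u / h u)) u := by
    intro u
    have h1 : HasDerivAt h (p * exp u) u := by
      exact ((Real.hasDerivAt_exp u).const_mul p).const_add (1 - p)
    have h2 : HasDerivAt (fun u => p * exp u) (p * exp u) u :=
      (Real.hasDerivAt_exp u).const_mul p
    have h3 : HasDerivAt (fun u => p * exp u / h u)
        ((p * exp u * h u - p * exp u * (p * exp u)) / (h u) ^ 2) u :=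
      h2.div h1 (hpos u).ne'
    have h4 : HasDerivAt (fun u : ℝ => p + u / 4) (1/4) u := by
      simpa using ((hasDerivAt_id u).div_const 4).const_add p
    have := h4.sub h3
    refine this.congr_deriv ?_
    have hne : h u ≠ 0 := (hpos u).ne'
    simp only [hh] at hne ⊢
    field_simp
  have hd'nonneg : ∀ u, 0 ≤ 1/4 - (p * exp u / h u) * (1 - p * exp u / h u) := by
    intro u
    set q := p * exp u / h u
    nlinarith [sq_nonneg (q - 1/2)]
  have hmono : Monotone g' := by
    apply monotone_of_deriv_nonneg
    · exact fun u => (hd' u).differentiableAt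
    · intro u
      rw [(hd' u).deriv]
      exact hd'nonneg u
  have hg'0 : g' 0 = 0 := by simp [hg', hh]
  have hg0 : g 0 = 0 := by simp [hg, hh]
  have key : 0 ≤ g s := by
    rcases le_total 0 s with hs | hs
    · have : MonotoneOn g (Set.Ici (0:ℝ)) := by
        apply monotoneOn_of_deriv_nonneg (convex_Ici 0)
        · exact fun u _ => ((hd u).differentiableAt.continuousAt).continuousWithinAt
        · exact fun u _ => (hd u).differentiableAt.differentiableWithinAt
        · intro u hu
          rw [(hd u).deriv]
          rw [interior_Ici] at hu
          have := hmono (le_of_lt hu)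
          rw [hg'0] at this
          exact this
      have := this (Set.self_mem_Ici) (Set.mem_Ici.2 hs) hs
      rwa [hg0] at this
    · have : AntitoneOn g (Set.Iic (0:ℝ)) := by
        apply antitoneOn_of_deriv_nonpos (convex_Iic 0)
        · exact fun u _ => ((hd u).differentiableAt.continuousAt).continuousWithinAt
        · exact fun u _ => (hd u).differentiableAt.differentiableWithinAt
        · intro u hu
          rw [(hd u).deriv]
          rw [interior_Iic] at hu
          have := hmono (le_of_lt hu)
          rw [hg'0] at this
          exact this
      have := this (Set.mem_Iic.2 hs) (Set.self_mem_Iic) hs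
      rwa [hg0] at this
  have : log (h s) ≤ s * p + s ^ 2 / 8 := by
    simp only [hg] at key; linarith
  calc h s = exp (log (h s)) := (Real.exp_log (hpos s)).symm
    _ ≤ exp (s * p + s ^ 2 / 8) := Real.exp_le_exp.2 this

section Prob
variable {Ω : Type} [MeasurableSpace Ω] {μ : Measure Ω} [IsProbabilityMeasure μ]

lemma integral_ite (q : Ω → Prop) [DecidablePred q] (hq : MeasurableSet {ω | q ω}) (c1 c2 : ℝ) :
    ∫ ω, (if q ω then c1 else c2) ∂μ
      = (μ {ω | q ω}).toReal * c1 + (1 - (μ {ω | q ω}).toReal) * c2 := by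
  have hfun : (fun ω => if q ω then c1 else c2)
      = fun ω => ({ω | q ω}.indicator (fun _ => c1 - c2)) ω + c2 := by
    funext ω; by_cases h : q ω <;> simp [Set.indicator, h]
  rw [hfun, integral_add ((integrable_const (c1 - c2)).indicator hq) (integrable_const c2),
    integral_indicator_const _ hq, integral_const]
  simp [smul_eq_mul]
  simp only [measureReal_def]
  ring

lemma integrable_ite (q : Ω → Prop) [DecidablePred q] (hq : MeasurableSet {ω | q ω})
    (c1 c2 : ℝ) : Integrable (fun ω => if q ω then c1 else c2) μ := by
  have : (fun ω => if q ω then c1 else c2)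
      = fun ω => ({ω | q ω}.indicator (fun _ => c1 - c2)) ω + c2 := by
    funext ω; by_cases h : q ω <;> simp [Set.indicator, h]
  rw [this]
  exact ((integrable_const (c1 - c2)).indicator hq).add (integrable_const c2)

lemma mgf_bound_plus (q : Ω → Prop) [DecidablePred q] (hq : MeasurableSet {ω | q ω}) (p : ℝ)
    (hp0 : 0 ≤ p) (hp1 : p ≤ 1) (hμ : (μ {ω | q ω}).toReal = p) (s : ℝ) :
    mgf (fun ω => (if q ω then (1:ℝ) else 0) - p) μ s ≤ exp (s ^ 2 / 8) := by
  have hfun : (fun ω => exp (s * ((if q ω then (1:ℝ) else 0) - p)))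
      = fun ω => if q ω then exp (s * (1 - p)) else exp (s * (0 - p)) := by
    funext ω; by_cases h : q ω <;> simp [h]
  rw [mgf, hfun, integral_ite q hq, hμ]
  have h1 : exp (s * (1 - p)) = exp s * exp (-(s * p)) := by
    rw [← Real.exp_add]; ring_nf
  have h2 : exp (s * (0 - p)) = exp (-(s * p)) := by ring_nf
  rw [h1, h2]
  have key := hoeff_aux p hp0 hp1 s
  have hexp : (0:ℝ) < exp (-(s * p)) := Real.exp_pos _
  have heq : (p * (exp s * exp (-(s*p))) + (1 - p) * exp (-(s*p)))
      = (1 - p + p * exp s) * exp (-(s*p)) := by ring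
  rw [heq]
  calc (1 - p + p * exp s) * exp (-(s*p))
      ≤ exp (s * p + s ^ 2 / 8) * exp (-(s*p)) :=
        mul_le_mul_of_nonneg_right key hexp.le
    _ = exp (s ^ 2 / 8) := by rw [← Real.exp_add]; ring_nf

lemma mgf_bound_minus (q : Ω → Prop) [DecidablePred q] (hq : MeasurableSet {ω | q ω}) (p : ℝ)
    (hp0 : 0 ≤ p) (hp1 : p ≤ 1) (hμ : (μ {ω | q ω}).toReal = p) (s : ℝ) :
    mgf (fun ω => p - (if q ω then (1:ℝ) else 0)) μ s ≤ exp (s ^ 2 / 8) := by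
  have hfun : (fun ω => p - (if q ω then (1:ℝ) else 0))
      = -(fun ω => (if q ω then (1:ℝ) else 0) - p) := by
    funext ω; simp
  rw [hfun, mgf_neg]
  have := mgf_bound_plus q hq p hp0 hp1 hμ (-s)
  simpa using this

lemma chernoff (μ : Measure Ω) [IsProbabilityMeasure μ]
    {m : ℕ} (hm : 0 < m) (W : Fin m → Ω → ℝ)
    (hmeas : ∀ i, Measurable (W i))
    (hindep : iIndepFun W μ)
    (hint : ∀ i (s : ℝ), Integrable (fun ω => exp (s * W i ω)) μ)
    (hmgf : ∀ i (s : ℝ), mgf (W i) μ s ≤ exp (s ^ 2 / 8))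
    (a : ℝ) (ha : 0 < a) :
    (μ {ω | a ≤ ∑ i, W i ω}).toReal ≤ exp (-(2 * a ^ 2 / m)) := by
  set s : ℝ := 4 * a / m with hs
  have hm' : (0:ℝ) < m := Nat.cast_pos.2 hm
  have hs0 : 0 ≤ s := by positivity
  have hsum_int : Integrable (fun ω => exp (s * (∑ i, W i) ω)) μ :=
    hindep.integrable_exp_mul_sum hmeas (fun i _ => hint i s)
  have h1 : (μ {ω | a ≤ (∑ i, W i) ω}).toReal ≤ exp (-s * a) * mgf (∑ i, W i) μ s :=
    measure_ge_le_exp_mul_mgf a hs0 hsum_int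
  have h2 : mgf (∑ i, W i) μ s = ∏ i, mgf (W i) μ s := hindep.mgf_sum hmeas _
  have h3 : (∏ i, mgf (W i) μ s) ≤ exp (m * (s ^ 2 / 8)) := by
    calc (∏ i, mgf (W i) μ s) ≤ ∏ _i : Fin m, exp (s ^ 2 / 8) :=
          Finset.prod_le_prod (fun i _ => mgf_nonneg) (fun i _ => hmgf i s)
      _ = exp (m * (s ^ 2 / 8)) := by
          rw [Finset.prod_const, ← Real.exp_nat_mul]; simp
  have h4 : exp (-s * a) * mgf (∑ i, W i) μ s ≤ exp (-s * a + m * (s ^ 2 / 8)) := by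
    rw [Real.exp_add]
    exact mul_le_mul_of_nonneg_left (h2 ▸ h3) (le_of_lt (Real.exp_pos (-s * a)))
  have h5 : -s * a + (m : ℝ) * (s ^ 2 / 8) = -(2 * a ^ 2 / m) := by
    field_simp [hs]
    rw [hs]; field_simp; ring
  have hset : {ω | a ≤ ∑ i, W i ω} = {ω | a ≤ (∑ i, W i) ω} := by
    ext ω; simp
  rw [hset]
  calc (μ {ω | a ≤ (∑ i, W i) ω}).toReal ≤ exp (-s * a) * mgf (∑ i, W i) μ s := h1
    _ ≤ exp (-s * a + m * (s ^ 2 / 8)) := h4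
    _ = exp (-(2 * a ^ 2 / m)) := by rw [h5]

lemma unif_cdf {X : Ω → ℝ} {t : ℝ} (hX : Measurable X) (ht : 0 < t)
    (hunif : Measure.map X μ = (volume (Set.Icc (0:ℝ) t))⁻¹ • volume.restrict (Set.Icc (0:ℝ) t))
    (x : ℝ) (hxt : x ≤ t) :
    μ {ω | X ω ≤ x} = ENNReal.ofReal (x / t) := by
  have h1 : {ω | X ω ≤ x} = X ⁻¹' Set.Iic x := rfl
  rw [h1, ← Measure.map_apply hX measurableSet_Iic, hunif]
  rw [Measure.smul_apply, Measure.restrict_apply measurableSet_Iic]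
  have h2 : Set.Iic x ∩ Set.Icc 0 t = Set.Icc 0 x := by
    ext w
    simp only [Set.mem_inter_iff, Set.mem_Iic, Set.mem_Icc]
    constructor
    · rintro ⟨h, h0, _⟩; exact ⟨h0, h⟩
    · rintro ⟨h0, h⟩; exact ⟨h, h0, le_trans h hxt⟩
  rw [h2, Real.volume_Icc, Real.volume_Icc, smul_eq_mul, sub_zero, sub_zero,
    ENNReal.ofReal_div_of_pos ht, div_eq_mul_inv, mul_comm]

lemma unif_Icc_one {X : Ω → ℝ} {t : ℝ} (hX : Measurable X) (ht : 0 < t)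
    (hunif : Measure.map X μ = (volume (Set.Icc (0:ℝ) t))⁻¹ • volume.restrict (Set.Icc (0:ℝ) t)) :
    μ {ω | X ω ∉ Set.Icc 0 t} = 0 := by
  have h1 : {ω | X ω ∈ Set.Icc 0 t} = X ⁻¹' Set.Icc 0 t := rfl
  have h2 : μ {ω | X ω ∈ Set.Icc 0 t} = 1 := by
    rw [h1, ← Measure.map_apply hX measurableSet_Icc, hunif,
      Measure.smul_apply, Measure.restrict_apply measurableSet_Icc, Set.inter_self,
      Real.volume_Icc, sub_zero, smul_eq_mul]
    rw [ENNReal.inv_mul_cancel (by simpa using ht) ENNReal.ofReal_ne_top]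
  have h3 : {ω | X ω ∉ Set.Icc 0 t} = {ω | X ω ∈ Set.Icc 0 t}ᶜ := rfl
  rw [h3]
  have hms : MeasurableSet {ω | X ω ∈ Set.Icc 0 t} := hX measurableSet_Icc
  rw [measure_compl hms (measure_ne_top μ _), h2, measure_univ, tsub_self]

lemma unif_point {X : Ω → ℝ} {t : ℝ} (hX : Measurable X)
    (hunif : Measure.map X μ = (volume (Set.Icc (0:ℝ) t))⁻¹ • volume.restrict (Set.Icc (0:ℝ) t))
    (c : ℝ) : μ {ω | X ω = c} = 0 := by
  have h1 : {ω | X ω = c} = X ⁻¹' {c} := rfl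
  rw [h1, ← Measure.map_apply hX (measurableSet_singleton c), hunif,
    Measure.smul_apply, Measure.restrict_apply (measurableSet_singleton c), smul_eq_mul]
  have : volume ({c} ∩ Set.Icc (0:ℝ) t) = 0 :=
    measure_mono_null Set.inter_subset_left (Real.volume_singleton)
  rw [this, mul_zero]

end Prob

/-- Median concentration for a sample consisting of `k` fixed points in `[0,t]` together with
`m ≥ 1` independent uniform points on `[0,t]`: for `δ/t > k/(2m)`, the median `M`
(the `⌈n/2⌉`-th smallest of the `n = k + m` values) satisfies
`P(|M - t/2| ≥ δ) ≤ 2 exp(-2m (δ/t - k/(2m))²)`. -/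
theorem median_concentration
    {Ω : Type} [MeasurableSpace Ω] (μ : Measure Ω) [IsProbabilityMeasure μ]
    (k m : ℕ) (hm : 0 < m) (t : ℝ) (ht : 0 < t)
    (y : Fin k → ℝ) (hy : ∀ i, y i ∈ Set.Icc 0 t)
    (X : Fin m → Ω → ℝ)
    (hmeas : ∀ i, Measurable (X i))
    (hindep : iIndepFun X μ)
    (hunif : ∀ i, Measure.map (X i) μ =
      (volume (Set.Icc (0 : ℝ) t))⁻¹ • volume.restrict (Set.Icc (0 : ℝ) t))
    (δ : ℝ) (hδ : 0 < δ) (hδk : (k : ℝ) / (2 * m) < δ / t) :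
    (μ {ω | δ ≤ |orderStat ((k + m + 1) / 2) (Fin.append y fun i => X i ω) - t / 2|}).toReal ≤
      2 * Real.exp (-2 * m * (δ / t - k / (2 * m)) ^ 2) := by
  classical
  set j : ℕ := (k + m + 1) / 2 with hjdef
  have hj1 : 1 ≤ j := by omega
  have hjn : j ≤ k + m := by omega
  have hmR : (0:ℝ) < m := Nat.cast_pos.2 hm
  have hjlow : ((k:ℝ) + m) / 2 ≤ j := by
    have h2j : k + m ≤ 2 * j := by omega
    have := (Nat.cast_le (α := ℝ)).2 h2j
    push_cast at this; linarith
  have hjhigh : (j:ℝ) ≤ ((k:ℝ) + m + 1) / 2 := by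
    have h2j : 2 * j ≤ k + m + 1 := by omega
    have := (Nat.cast_le (α := ℝ)).2 h2j
    push_cast at this; linarith
  set G : Set Ω := {ω | ∀ i, X i ω ∈ Set.Icc 0 t ∧ X i ω ≠ t/2 + δ} with hGdef
  have hGc : μ Gᶜ = 0 := by
    have hsub : Gᶜ ⊆ ⋃ i, ({ω | X i ω ∉ Set.Icc 0 t} ∪ {ω | X i ω = t/2 + δ}) := by
      intro ω hω
      simp only [hGdef, Set.mem_compl_iff, Set.mem_setOf_eq, not_forall] at hω
      obtain ⟨i, hi⟩ := hω
      refine Set.mem_iUnion.2 ⟨i, ?_⟩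
      by_cases h1 : X i ω ∈ Set.Icc 0 t
      · right
        by_contra h2
        exact hi ⟨h1, h2⟩
      · left; exact h1
    refine measure_mono_null hsub (measure_iUnion_null fun i => ?_)
    exact measure_union_null (unif_Icc_one (hmeas i) ht (hunif i))
      (unif_point (hmeas i) (hunif i) _)
  have hzIcc : ∀ ω ∈ G, ∀ i, Fin.append y (fun i => X i ω) i ∈ Set.Icc 0 t := by
    intro ω hω i
    refine Fin.addCases (fun i => ?_) (fun i => ?_) i
    · rw [Fin.append_left]; exact hy i
    · rw [Fin.append_right]; exact (hω i).1
  by_cases hcase : t / 2 < δ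
  · -- degenerate case: the event is a.s. empty
    have hsub : {ω | δ ≤ |orderStat j (Fin.append y fun i => X i ω) - t / 2|} ⊆ Gᶜ := by
      intro ω hω
      by_contra hG'
      rw [Set.notMem_compl_iff] at hG'
      have hmem := orderStat_mem_Icc (Fin.append y fun i => X i ω) hj1
        (by simpa using hjn) t (hzIcc ω hG')
      have habs : |orderStat j (Fin.append y fun i => X i ω) - t / 2| ≤ t / 2 := by
        rw [abs_le]
        constructor <;> [linarith [hmem.1]; linarith [hmem.2]]
      have : δ ≤ t / 2 := le_trans hω habs
      linarith
    have : μ {ω | δ ≤ |orderStat j (Fin.append y fun i => X i ω) - t / 2|} = 0 :=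
      measure_mono_null hsub hGc
    rw [this]
    simp only [ENNReal.toReal_zero]
    positivity
  · push_neg at hcase
    set pa : ℝ := (t/2 + δ) / t with hppdef
    set pb : ℝ := (t/2 - δ) / t with hpmdef
    have hpp0 : 0 ≤ pa := by positivity
    have hpp1 : pa ≤ 1 := by rw [div_le_one ht]; linarith
    have hpm0 : 0 ≤ pb := div_nonneg (by linarith) ht.le
    have hpm1 : pb ≤ 1 := by rw [div_le_one ht]; linarith
    set a : ℝ := m * (δ/t - k/(2*m)) with hadef
    have ha : 0 < a := mul_pos hmR (by linarith)
    set Wp : Fin m → Ω → ℝ := fun i ω => pa - (if X i ω ≤ t/2 + δ then 1 else 0) with hWp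
    set Wm : Fin m → Ω → ℝ := fun i ω => (if X i ω ≤ t/2 - δ then 1 else 0) - pb with hWm
    have hqp : ∀ (i : Fin m) (c : ℝ), MeasurableSet {ω | X i ω ≤ c} :=
      fun i c => (hmeas i) measurableSet_Iic
    have hWpm : ∀ i, Measurable (Wp i) := fun i =>
      measurable_const.sub (Measurable.ite (hqp i _) measurable_const measurable_const)
    have hWmm : ∀ i, Measurable (Wm i) := fun i =>
      (Measurable.ite (hqp i _) measurable_const measurable_const).sub measurable_const
    have hWpi : iIndepFun Wp μ := by
      have := hindep.comp (fun _ (v : ℝ) => pa - (if v ≤ t/2 + δ then 1 else 0))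
        (fun _ => measurable_const.sub
          (Measurable.ite measurableSet_Iic measurable_const measurable_const))
      exact this
    have hWmi : iIndepFun Wm μ := by
      have := hindep.comp (fun _ (v : ℝ) => (if v ≤ t/2 - δ then (1:ℝ) else 0) - pb)
        (fun _ => (Measurable.ite measurableSet_Iic measurable_const measurable_const).sub
          measurable_const)
      exact this
    have hWpint : ∀ i (s : ℝ), Integrable (fun ω => exp (s * Wp i ω)) μ := by
      intro i s
      have heq : (fun ω => exp (s * Wp i ω))
          = fun ω => if X i ω ≤ t/2 + δ then exp (s * (pa - 1)) else exp (s * (pa - 0)) := by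
        funext ω; by_cases h : X i ω ≤ t/2 + δ <;> simp [hWp, h]
      rw [heq]
      exact integrable_ite _ (hqp i _) _ _
    have hWmint : ∀ i (s : ℝ), Integrable (fun ω => exp (s * Wm i ω)) μ := by
      intro i s
      have heq : (fun ω => exp (s * Wm i ω))
          = fun ω => if X i ω ≤ t/2 - δ then exp (s * (1 - pb)) else exp (s * (0 - pb)) := by
        funext ω; by_cases h : X i ω ≤ t/2 - δ <;> simp [hWm, h]
      rw [heq]
      exact integrable_ite _ (hqp i _) _ _
    have hPp : ∀ i, (μ {ω | X i ω ≤ t/2 + δ}).toReal = pa := by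
      intro i
      rw [unif_cdf (hmeas i) ht (hunif i) _ (by linarith)]
      exact ENNReal.toReal_ofReal hpp0
    have hPm : ∀ i, (μ {ω | X i ω ≤ t/2 - δ}).toReal = pb := by
      intro i
      rw [unif_cdf (hmeas i) ht (hunif i) _ (by linarith)]
      exact ENNReal.toReal_ofReal hpm0
    have hWpmgf : ∀ i (s : ℝ), mgf (Wp i) μ s ≤ exp (s ^ 2 / 8) := fun i s =>
      mgf_bound_minus (fun ω => X i ω ≤ t/2 + δ) (hqp i _) pa hpp0 hpp1 (hPp i) s
    have hWmmgf : ∀ i (s : ℝ), mgf (Wm i) μ s ≤ exp (s ^ 2 / 8) := fun i s =>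
      mgf_bound_plus (fun ω => X i ω ≤ t/2 - δ) (hqp i _) pb hpm0 hpm1 (hPm i) s
    have hTp := chernoff μ hm Wp hWpm hWpi hWpint hWpmgf a ha
    have hTm := chernoff μ hm Wm hWmm hWmi hWmint hWmmgf a ha
    -- arithmetic identities
    have haexp : a = m * δ / t - k / 2 := by
      rw [hadef]; field_simp
    have hmpp : (m:ℝ) * pa = m / 2 + m * δ / t := by
      rw [hppdef]; field_simp
    have hmpm : (m:ℝ) * pb = m / 2 - m * δ / t := by
      rw [hpmdef]; field_simp
    -- event inclusion
    have hsubE : {ω | δ ≤ |orderStat j (Fin.append y fun i => X i ω) - t / 2|}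
        ⊆ ({ω | a ≤ ∑ i, Wp i ω} ∪ {ω | a ≤ ∑ i, Wm i ω}) ∪ Gᶜ := by
      intro ω hω
      by_cases hωG : ω ∈ G
      swap
      · exact Set.mem_union_right _ hωG
      refine Set.mem_union_left _ ?_
      have habs : δ ≤ |orderStat j (Fin.append y fun i => X i ω) - t / 2| := hω
      rcases le_abs.mp habs with hup | hlo
      · -- upper tail : t/2 + δ ≤ M
        left
        have hM : t/2 + δ ≤ orderStat j (Fin.append y fun i => X i ω) := by linarith
        have hcount : (Finset.univ.filter
            fun i : Fin (k+m) => Fin.append y (fun i => X i ω) i < t/2 + δ).card < j := by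
          by_contra hc
          push_neg at hc
          have := orderStat_lt (Fin.append y fun i => X i ω) hj1 (t/2 + δ) hc
          linarith
        have heqf : (Finset.univ.filter fun i : Fin m => X i ω ≤ t/2 + δ)
            = Finset.univ.filter fun i : Fin m => X i ω < t/2 + δ := by
          refine Finset.filter_congr fun i _ => ?_
          constructor
          · intro h; exact lt_of_le_of_ne h ((hωG i).2)
          · exact le_of_lt
        have hXle : (Finset.univ.filter fun i : Fin m => X i ω ≤ t/2 + δ).card < j := by
          rw [heqf]
          refine lt_of_le_of_lt ?_ hcount
          rw [count_append y (fun i => X i ω) (fun v => v < t/2 + δ)]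
          omega
        have hXR : ((Finset.univ.filter fun i : Fin m => X i ω ≤ t/2 + δ).card : ℝ)
            ≤ (j:ℝ) - 1 := by
          have h1 : (Finset.univ.filter fun i : Fin m => X i ω ≤ t/2 + δ).card + 1 ≤ j := hXle
          have := (Nat.cast_le (α := ℝ)).2 h1
          push_cast at this; linarith
        have hsum : ∑ i, Wp i ω
            = m * pa - ((Finset.univ.filter fun i : Fin m => X i ω ≤ t/2 + δ).card : ℝ) := by
          simp only [hWp, Finset.sum_sub_distrib, Finset.sum_const, Finset.card_univ,
            Fintype.card_fin, nsmul_eq_mul, Finset.sum_boole]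
        show a ≤ ∑ i, Wp i ω
        rw [hsum]
        have : (j:ℝ) - 1 ≤ (m:ℝ) * pa - a := by
          rw [haexp, hmpp]; linarith
        linarith
      · -- lower tail : M ≤ t/2 - δ
        right
        have hM : orderStat j (Fin.append y fun i => X i ω) ≤ t/2 - δ := by linarith
        have hne : {x : ℝ | j ≤ (Finset.univ.filter
            fun i : Fin (k+m) => Fin.append y (fun i => X i ω) i ≤ x).card}.Nonempty := by
          refine ⟨t, ?_⟩
          simp only [Set.mem_setOf_eq]
          have : (Finset.univ.filter
              fun i : Fin (k+m) => Fin.append y (fun i => X i ω) i ≤ t) = Finset.univ :=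
            Finset.filter_true_of_mem fun i _ => (hzIcc ω hωG i).2
          rw [this]
          simpa using hjn
        have hcount := le_count_of_orderStat_le (Fin.append y fun i => X i ω) hj1
          (t/2 - δ) hne hM
        rw [count_append y (fun i => X i ω) (fun v => v ≤ t/2 - δ)] at hcount
        have hyk : (Finset.univ.filter fun i : Fin k => y i ≤ t/2 - δ).card ≤ k := by
          refine le_trans (Finset.card_filter_le _ _) ?_
          simp
        have hXge : j - k ≤ (Finset.univ.filter fun i : Fin m => X i ω ≤ t/2 - δ).card := by
          omega
        have hXR : (j:ℝ) - k ≤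
            ((Finset.univ.filter fun i : Fin m => X i ω ≤ t/2 - δ).card : ℝ) := by
          have h1 : j ≤ (Finset.univ.filter fun i : Fin m => X i ω ≤ t/2 - δ).card + k := by
            omega
          have := (Nat.cast_le (α := ℝ)).2 h1
          push_cast at this; linarith
        have hsum : ∑ i, Wm i ω
            = ((Finset.univ.filter fun i : Fin m => X i ω ≤ t/2 - δ).card : ℝ) - m * pb := by
          simp only [hWm, Finset.sum_sub_distrib, Finset.sum_const, Finset.card_univ,
            Fintype.card_fin, nsmul_eq_mul, Finset.sum_boole]
        show a ≤ ∑ i, Wm i ω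
        rw [hsum]
        have : a + (m:ℝ) * pb ≤ (j:ℝ) - k := by
          rw [haexp, hmpm]; linarith
        linarith
    -- measure arithmetic
    have h1 : μ {ω | δ ≤ |orderStat j (Fin.append y fun i => X i ω) - t / 2|}
        ≤ μ {ω | a ≤ ∑ i, Wp i ω} + μ {ω | a ≤ ∑ i, Wm i ω} := by
      calc μ {ω | δ ≤ |orderStat j (Fin.append y fun i => X i ω) - t / 2|}
          ≤ μ (({ω | a ≤ ∑ i, Wp i ω} ∪ {ω | a ≤ ∑ i, Wm i ω}) ∪ Gᶜ) := measure_mono hsubE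
        _ ≤ μ ({ω | a ≤ ∑ i, Wp i ω} ∪ {ω | a ≤ ∑ i, Wm i ω}) + μ Gᶜ := measure_union_le _ _
        _ = μ ({ω | a ≤ ∑ i, Wp i ω} ∪ {ω | a ≤ ∑ i, Wm i ω}) := by rw [hGc, add_zero]
        _ ≤ μ {ω | a ≤ ∑ i, Wp i ω} + μ {ω | a ≤ ∑ i, Wm i ω} := measure_union_le _ _
    have h2 : (μ {ω | δ ≤ |orderStat j (Fin.append y fun i => X i ω) - t / 2|}).toReal
        ≤ (μ {ω | a ≤ ∑ i, Wp i ω}).toReal + (μ {ω | a ≤ ∑ i, Wm i ω}).toReal := by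
      rw [← ENNReal.toReal_add (measure_ne_top μ _) (measure_ne_top μ _)]
      exact ENNReal.toReal_mono
        (ENNReal.add_ne_top.2 ⟨measure_ne_top μ _, measure_ne_top μ _⟩) h1
    have hexp_eq : -(2 * a ^ 2 / (m:ℝ)) = -2 * m * (δ/t - k/(2*m)) ^ 2 := by
      rw [hadef]; field_simp
    calc (μ {ω | δ ≤ |orderStat j (Fin.append y fun i => X i ω) - t / 2|}).toReal
        ≤ (μ {ω | a ≤ ∑ i, Wp i ω}).toReal + (μ {ω | a ≤ ∑ i, Wm i ω}).toReal := h2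
      _ ≤ exp (-(2 * a ^ 2 / m)) + exp (-(2 * a ^ 2 / m)) := add_le_add hTp hTm
      _ = 2 * exp (-2 * m * (δ/t - k/(2*m)) ^ 2) := by rw [hexp_eq]; ring
end

section
/- Let m ∈ (0, 1] and let X be a real random variable whose distribution on [0,1] is absolutely continuous with density bounded below by m on [0,1]. Then for every q ∈ [0,1], Var((X − q)²) ≥ m/180. -/
open MeasureTheory ProbabilityTheory

lemma poly_int_bound (q E : ℝ) :
    (1:ℝ)/180 ≤ ∫ x in (0:ℝ)..1, ((x - q) ^ 2 - E) ^ 2 := by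
  have h1' : ∫ x in (0:ℝ)..1, ((x - q) ^ 2 - E) ^ 2
      = ∫ y in (0-q)..(1-q), (y ^ 2 - E) ^ 2 := by
    rw [← intervalIntegral.integral_comp_sub_right (fun y => (y ^ 2 - E) ^ 2) q]
  have h2 : ∫ y in (0-q)..(1-q), (y ^ 2 - E) ^ 2
      = ∫ y in (0-q)..(1-q), (y ^ 4 - 2 * E * y ^ 2 + E ^ 2) := by
    apply intervalIntegral.integral_congr; intro y _; ring
  rw [h1', h2]
  have i4 : IntervalIntegrable (fun y : ℝ => y ^ 4) volume (0-q) (1-q) :=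
    (continuous_pow 4).intervalIntegrable _ _
  have i2 : IntervalIntegrable (fun y : ℝ => 2 * E * y ^ 2) volume (0-q) (1-q) :=
    (continuous_const.mul (continuous_pow 2)).intervalIntegrable _ _
  have ic : IntervalIntegrable (fun _ : ℝ => E ^ 2) volume (0-q) (1-q) :=
    intervalIntegrable_const
  rw [intervalIntegral.integral_add (i4.sub i2) ic, intervalIntegral.integral_sub i4 i2,
    intervalIntegral.integral_const, intervalIntegral.integral_const_mul,
    integral_pow, integral_pow]
  norm_num
  nlinarith [sq_nonneg (3 * E - ((1-q)^3 + q^3)), sq_nonneg (1 - 2*q)]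

/-- If `X` has an absolutely continuous distribution on `[0,1]` with density bounded below
by `m ∈ (0,1]` on `[0,1]`, then for every `q ∈ [0,1]`, `Var((X - q)²) ≥ m/180`. -/
theorem variance_of_squared_difference_lower_bound
    {Ω : Type} [MeasurableSpace Ω] (μ : Measure Ω) [IsProbabilityMeasure μ]
    (m : ℝ) (hm0 : 0 < m) (hm1 : m ≤ 1)
    (X : Ω → ℝ) (hX : Measurable X)
    (f : ℝ → ENNReal)
    (hf : Measure.map X μ = (volume.restrict (Set.Icc (0 : ℝ) 1)).withDensity f)
    (hflb : ∀ x ∈ Set.Icc (0 : ℝ) 1, ENNReal.ofReal m ≤ f x)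
    (q : ℝ) (hq : q ∈ Set.Icc (0 : ℝ) 1) :
    m / 180 ≤ variance (fun ω => (X ω - q) ^ 2) μ := by
  set Y : Ω → ℝ := fun ω => (X ω - q) ^ 2 with hY
  have hYmeas : Measurable Y := ((hX.sub measurable_const).pow measurable_const)
  -- X ∈ [0,1] a.e.
  have hae : ∀ᵐ ω ∂μ, X ω ∈ Set.Icc (0:ℝ) 1 := by
    have h1 : μ (X ⁻¹' (Set.Icc (0:ℝ) 1)ᶜ) = 0 := by
      rw [← Measure.map_apply hX (measurableSet_Icc.compl), hf,
        withDensity_apply _ measurableSet_Icc.compl,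
        Measure.restrict_restrict measurableSet_Icc.compl]
      simp
    rw [ae_iff]
    exact h1
  -- Y bounded a.e.
  have hYbdd : ∀ᵐ ω ∂μ, ‖Y ω‖ ≤ 1 := by
    filter_upwards [hae] with ω hω
    have h1 : |X ω - q| ≤ 1 := by
      rw [abs_le]; constructor <;> [linarith [hω.1, hq.2]; linarith [hω.2, hq.1]]
    calc ‖Y ω‖ = |X ω - q| ^ 2 := by rw [hY]; simp [abs_pow, Real.norm_eq_abs]
    _ ≤ 1 := by nlinarith [abs_nonneg (X ω - q)]
  have hY2 : MemLp Y 2 μ := MemLp.of_bound hYmeas.aestronglyMeasurable 1 hYbdd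
  set E : ℝ := μ[Y] with hE
  set g : ℝ → ℝ := fun x => ((x - q) ^ 2 - E) ^ 2 with hg
  have hgmeas : Measurable g := by fun_prop
  have hgcont : Continuous g := by fun_prop
  -- evariance as lintegral of g ∘ X
  have hev : evariance Y μ = ∫⁻ ω, ENNReal.ofReal (g (X ω)) ∂μ := by
    rw [evariance_eq_lintegral_ofReal]
  -- push through map
  have hmap : ∫⁻ ω, ENNReal.ofReal (g (X ω)) ∂μ
      = ∫⁻ x, ENNReal.ofReal (g x) ∂((volume.restrict (Set.Icc (0:ℝ) 1)).withDensity f) := by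
    rw [← hf]
    exact (lintegral_map hgmeas.ennreal_ofReal hX).symm
  -- measure comparison
  have hmle : (ENNReal.ofReal m) • volume.restrict (Set.Icc (0:ℝ) 1)
      ≤ (volume.restrict (Set.Icc (0:ℝ) 1)).withDensity f := by
    rw [Measure.le_iff]
    intro s hs
    rw [withDensity_apply f hs, Measure.smul_apply, smul_eq_mul]
    calc ENNReal.ofReal m * (volume.restrict (Set.Icc (0:ℝ) 1)) s
        = ∫⁻ _ in s, ENNReal.ofReal m ∂(volume.restrict (Set.Icc (0:ℝ) 1)) := by
          rw [setLIntegral_const]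
      _ ≤ ∫⁻ x in s, f x ∂(volume.restrict (Set.Icc (0:ℝ) 1)) := by
          rw [Measure.restrict_restrict hs]
          refine lintegral_mono_ae ?_
          refine (ae_restrict_iff' (hs.inter measurableSet_Icc)).2 (ae_of_all _ ?_)
          exact fun x hx => hflb x hx.2
  -- integral of g over Icc
  have hint : IntegrableOn g (Set.Icc (0:ℝ) 1) volume := hgcont.integrableOn_Icc
  have hIcc : ∫ x in Set.Icc (0:ℝ) 1, g x = ∫ x in (0:ℝ)..1, g x := by
    rw [integral_Icc_eq_integral_Ioc, intervalIntegral.integral_of_le (by norm_num : (0:ℝ) ≤ 1)]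
  have hI : (1:ℝ)/180 ≤ ∫ x in Set.Icc (0:ℝ) 1, g x := by
    rw [hIcc]; exact poly_int_bound q E
  have hlint : ∫⁻ x in Set.Icc (0:ℝ) 1, ENNReal.ofReal (g x)
      = ENNReal.ofReal (∫ x in Set.Icc (0:ℝ) 1, g x) :=
    (ofReal_integral_eq_lintegral_ofReal hint (ae_of_all _ fun x => sq_nonneg _)).symm
  -- main chain
  have hlb : ENNReal.ofReal (m/180) ≤ evariance Y μ := by
    rw [hev, hmap]
    calc ENNReal.ofReal (m/180)
        = ENNReal.ofReal m * ENNReal.ofReal (1/180) := by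
          rw [← ENNReal.ofReal_mul hm0.le, mul_one_div]
      _ ≤ ENNReal.ofReal m * ENNReal.ofReal (∫ x in Set.Icc (0:ℝ) 1, g x) := by
          exact mul_le_mul_right (ENNReal.ofReal_le_ofReal hI) _
      _ = ENNReal.ofReal m * ∫⁻ x in Set.Icc (0:ℝ) 1, ENNReal.ofReal (g x) := by rw [hlint]
      _ = ∫⁻ x, ENNReal.ofReal (g x)
            ∂((ENNReal.ofReal m) • volume.restrict (Set.Icc (0:ℝ) 1)) := by
          rw [lintegral_smul_measure, smul_eq_mul]
      _ ≤ ∫⁻ x, ENNReal.ofReal (g x)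
            ∂((volume.restrict (Set.Icc (0:ℝ) 1)).withDensity f) :=
          lintegral_mono' hmle le_rfl
  rw [← hY2.ofReal_variance_eq] at hlb
  exact (ENNReal.ofReal_le_ofReal_iff (variance_nonneg _ _)).1 hlb
end

section
/- Let m ∈ (0,1) and η > 0, and let X₁, …, X_N be independent identically distributed real random variables with P(X₁ < 1/2 − η) = (1 − m)/2, P(1/2 − η ≤ X₁ ≤ 1/2 + η) = m, and P(X₁ > 1/2 + η) = (1 − m)/2. Let M be the ⌈N/2⌉-th smallest of X₁, …, X_N. Then P(M ∉ [1/2 − η, 1/2 + η]) ≤ 2 · exp(−N m² / 2). -/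
open MeasureTheory ProbabilityTheory

lemma core_ineq {x : ℝ} (hx : 0 ≤ x) :
    (1 + x) * Real.exp (-x) + (1 - x) * Real.exp x ≤ 2 * Real.exp (-x ^ 2 / 2) := by
  set F : ℝ → ℝ := fun y => 2 * Real.exp (-y ^ 2 / 2) -
    ((1 + y) * Real.exp (-y) + (1 - y) * Real.exp y) with hFdef
  have hF : ∀ y : ℝ, HasDerivAt F
      (y * (Real.exp y + Real.exp (-y) - 2 * Real.exp (-y ^ 2 / 2))) y := by
    intro y
    have h1 : HasDerivAt (fun y : ℝ => -y ^ 2 / 2) (-y) y := by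
      have := ((hasDerivAt_pow 2 y).neg).div_const 2
      refine this.congr_deriv ?_
      ring
    have h1' : HasDerivAt (fun y : ℝ => Real.exp (-y ^ 2 / 2))
        (Real.exp (-y ^ 2 / 2) * (-y)) y := h1.exp
    have hneg : HasDerivAt (fun y : ℝ => -y) (-1 : ℝ) y := (hasDerivAt_id y).neg
    have h2 : HasDerivAt (fun y : ℝ => (1 + y) * Real.exp (-y))
        (1 * Real.exp (-y) + (1 + y) * (Real.exp (-y) * (-1))) y :=
      ((hasDerivAt_id y).const_add 1).mul hneg.exp
    have h3 : HasDerivAt (fun y : ℝ => (1 - y) * Real.exp y)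
        ((-1) * Real.exp y + (1 - y) * Real.exp y) y :=
      ((hasDerivAt_id y).const_sub 1).mul (Real.hasDerivAt_exp y)
    have := (h1'.const_mul 2).sub (h2.add h3)
    refine this.congr_deriv ?_
    ring
  have hmono : MonotoneOn F (Set.Ici (0 : ℝ)) := by
    apply monotoneOn_of_deriv_nonneg (convex_Ici 0)
    · exact fun y _ => (hF y).differentiableAt.continuousAt.continuousWithinAt
    · exact fun y _ => (hF y).differentiableAt.differentiableWithinAt
    · intro y hy
      rw [interior_Ici] at hy
      rw [(hF y).deriv]
      have hy0 : (0 : ℝ) < y := hy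
      have he1 : Real.exp (-y ^ 2 / 2) ≤ 1 := by
        rw [Real.exp_le_one_iff]
        nlinarith
      have he2 : (2 : ℝ) ≤ Real.exp y + Real.exp (-y) := by
        have ha := Real.add_one_le_exp y
        have hb := Real.add_one_le_exp (-y)
        linarith
      nlinarith
  have h0 : F 0 = 0 := by norm_num [hFdef]
  have := hmono (Set.self_mem_Ici) (Set.mem_Ici.2 hx) hx
  rw [h0] at this
  simp only [hFdef] at this
  linarith

/-- Chernoff–Hoeffding tail bound for sums of i.i.d. indicator variables with mean `(1-m)/2`. -/
lemma tail_bound {Ω : Type} [MeasurableSpace Ω] (P : Measure Ω) [IsProbabilityMeasure P]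
    {m : ℝ} (hm0 : 0 < m) (hm1 : m < 1) {N : ℕ}
    (Y : Fin N → Ω → ℝ) (hYmeas : ∀ i, Measurable (Y i))
    (hYindep : iIndepFun Y P)
    (hY01 : ∀ i ω, Y i ω = 0 ∨ Y i ω = 1)
    (hp : ∀ i, P {ω | Y i ω = 1} = ENNReal.ofReal ((1 - m) / 2)) :
    (P {ω | (N : ℝ) / 2 ≤ ∑ i, Y i ω}).toReal ≤ Real.exp (-(N * m ^ 2) / 2) := by
  set t : ℝ := 2 * m with ht_def
  have ht : (0 : ℝ) ≤ t := by positivity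
  -- integrability of exp (t * Y i)
  have hint : ∀ i : Fin N, Integrable (fun ω => Real.exp (t * Y i ω)) P := by
    intro i
    refine Integrable.mono' (integrable_const (Real.exp t))
      (((hYmeas i).const_mul t).exp.aestronglyMeasurable) ?_
    filter_upwards with ω
    rw [Real.norm_eq_abs, Real.abs_exp]
    apply Real.exp_le_exp.2
    rcases hY01 i ω with h | h <;> simp [h] <;> nlinarith
  -- mgf of each Y i
  have hmgf : ∀ i : Fin N, mgf (Y i) P t = (1 - m) / 2 * (Real.exp t - 1) + 1 := by
    intro i
    have hA : MeasurableSet {ω | Y i ω = 1} := (hYmeas i) (measurableSet_singleton 1)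
    have heq : (fun ω => Real.exp (t * Y i ω)) =
        fun ω => ({ω | Y i ω = 1}).indicator (fun _ => Real.exp t - 1) ω + 1 := by
      funext ω
      rcases hY01 i ω with h | h
      · have : ω ∉ {ω | Y i ω = 1} := by simp [h]
        simp [h, Set.indicator_of_notMem this]
      · have : ω ∈ {ω | Y i ω = 1} := h
        simp [h, Set.indicator_of_mem this]
    rw [mgf, heq]
    rw [integral_add ((integrable_const (Real.exp t - 1)).indicator hA) (integrable_const 1)]
    rw [integral_indicator hA, setIntegral_const, integral_const]
    simp only [smul_eq_mul, measure_univ, ENNReal.toReal_one, one_mul]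
    rw [probReal_univ, mul_one, measureReal_def, hp i, ENNReal.toReal_ofReal (by linarith)]
  -- Chernoff bound
  have hS : (P {ω | (N : ℝ) / 2 ≤ (∑ i, Y i) ω}).toReal ≤
      Real.exp (-t * ((N : ℝ) / 2)) * mgf (∑ i, Y i) P t := by
    apply measure_ge_le_exp_mul_mgf ((N : ℝ) / 2) ht
    exact hYindep.integrable_exp_mul_sum hYmeas (fun i _ => hint i)
  have hsum_eq : {ω | (N : ℝ) / 2 ≤ ∑ i, Y i ω} = {ω | (N : ℝ) / 2 ≤ (∑ i, Y i) ω} := by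
    ext ω; simp
  rw [hsum_eq]
  refine hS.trans ?_
  rw [hYindep.mgf_sum hYmeas]
  have hprod : ∀ i ∈ Finset.univ, mgf (Y i) P t = (1 - m) / 2 * (Real.exp t - 1) + 1 :=
    fun i _ => hmgf i
  rw [Finset.prod_congr rfl hprod, Finset.prod_const]
  have hcard : (Finset.univ : Finset (Fin N)).card = N := by simp
  rw [hcard]
  -- now pure real arithmetic
  have hexp1 : Real.exp (-t * ((N : ℝ) / 2)) = Real.exp (-m) ^ N := by
    rw [← Real.exp_nat_mul]
    congr 1
    rw [ht_def]; ring
  rw [hexp1, ← mul_pow]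
  have hkey : Real.exp (-m) * ((1 - m) / 2 * (Real.exp t - 1) + 1) =
      ((1 + m) * Real.exp (-m) + (1 - m) * Real.exp m) / 2 := by
    have h2m : Real.exp (-m) * Real.exp t = Real.exp m := by
      rw [← Real.exp_add, ht_def]; ring_nf
    nlinarith [h2m]
  rw [hkey]
  have hcore := core_ineq (le_of_lt hm0)
  have hfin : ((1 + m) * Real.exp (-m) + (1 - m) * Real.exp m) / 2 ≤
      Real.exp (-m ^ 2 / 2) := by linarith
  have hnn : (0 : ℝ) ≤ ((1 + m) * Real.exp (-m) + (1 - m) * Real.exp m) / 2 := by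
    have e1 := Real.exp_pos (-m)
    have e2 := Real.exp_pos m
    nlinarith
  calc (((1 + m) * Real.exp (-m) + (1 - m) * Real.exp m) / 2) ^ N
      ≤ Real.exp (-m ^ 2 / 2) ^ N := pow_le_pow_left₀ hnn hfin N
    _ = Real.exp (-(N * m ^ 2) / 2) := by
        rw [← Real.exp_nat_mul]
        congr 1
        ring

/-- If `X₁, …, X_N` are i.i.d. with `P(X < 1/2 - η) = (1-m)/2`,
`P(1/2 - η ≤ X ≤ 1/2 + η) = m`, and `P(X > 1/2 + η) = (1-m)/2`, then the median `M`
(the `⌈N/2⌉`-th smallest value) satisfies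
`P(M ∉ [1/2 - η, 1/2 + η]) ≤ 2 exp(-N m²/2)`. -/
theorem median_in_central_band
    {Ω : Type} [MeasurableSpace Ω] (P : Measure Ω) [IsProbabilityMeasure P]
    (m η : ℝ) (hm : m ∈ Set.Ioo (0 : ℝ) 1) (hη : 0 < η)
    (N : ℕ) (hN : 0 < N) (X : Fin N → Ω → ℝ)
    (hmeas : ∀ i, Measurable (X i))
    (hindep : iIndepFun X P)
    (hident : ∀ i j, IdentDistrib (X i) (X j) P P)
    (hleft : ∀ i, P {ω | X i ω < 1 / 2 - η} = ENNReal.ofReal ((1 - m) / 2))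
    (hmid : ∀ i, P {ω | X i ω ∈ Set.Icc (1 / 2 - η) (1 / 2 + η)} = ENNReal.ofReal m)
    (hright : ∀ i, P {ω | 1 / 2 + η < X i ω} = ENNReal.ofReal ((1 - m) / 2)) :
    (P {ω | orderStat ((N + 1) / 2) (fun i => X i ω) ∉
        Set.Icc (1 / 2 - η) (1 / 2 + η)}).toReal ≤
      2 * Real.exp (-(N * m ^ 2) / 2) := by
  obtain ⟨hm0, hm1⟩ := hm
  set a : ℝ := 1 / 2 - η with ha_def
  set b : ℝ := 1 / 2 + η with hb_def
  set j : ℕ := (N + 1) / 2 with hj_def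
  have hj1 : 1 ≤ j := by omega
  have hjN : j ≤ N := by omega
  set i0 : Fin N := ⟨0, hN⟩ with hi0
  -- the two indicator families
  set YL : Fin N → Ω → ℝ := fun i ω => if X i ω < a then 1 else 0 with hYL_def
  set YR : Fin N → Ω → ℝ := fun i ω => if b < X i ω then 1 else 0 with hYR_def
  have hYLmeas : ∀ i, Measurable (YL i) := by
    intro i
    exact Measurable.ite (measurableSet_lt (hmeas i) measurable_const)
      measurable_const measurable_const
  have hYRmeas : ∀ i, Measurable (YR i) := by
    intro i
    exact Measurable.ite (measurableSet_lt measurable_const (hmeas i))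
      measurable_const measurable_const
  have hgL : Measurable (fun x : ℝ => if x < a then (1 : ℝ) else 0) :=
    Measurable.ite (measurableSet_lt measurable_id measurable_const)
      measurable_const measurable_const
  have hgR : Measurable (fun x : ℝ => if b < x then (1 : ℝ) else 0) :=
    Measurable.ite (measurableSet_lt measurable_const measurable_id)
      measurable_const measurable_const
  have hYLindep : iIndepFun YL P :=
    hindep.comp (fun _ => fun x : ℝ => if x < a then (1 : ℝ) else 0) (fun _ => hgL)
  have hYRindep : iIndepFun YR P :=
    hindep.comp (fun _ => fun x : ℝ => if b < x then (1 : ℝ) else 0) (fun _ => hgR)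
  have hYL01 : ∀ i ω, YL i ω = 0 ∨ YL i ω = 1 := by
    intro i ω; by_cases h : X i ω < a <;> simp [hYL_def, h]
  have hYR01 : ∀ i ω, YR i ω = 0 ∨ YR i ω = 1 := by
    intro i ω; by_cases h : b < X i ω <;> simp [hYR_def, h]
  have hpL : ∀ i, P {ω | YL i ω = 1} = ENNReal.ofReal ((1 - m) / 2) := by
    intro i
    have : {ω | YL i ω = 1} = {ω | X i ω < a} := by
      ext ω; by_cases h : X i ω < a <;> simp [hYL_def, h]
    rw [this]; exact hleft i
  have hpR : ∀ i, P {ω | YR i ω = 1} = ENNReal.ofReal ((1 - m) / 2) := by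
    intro i
    have : {ω | YR i ω = 1} = {ω | b < X i ω} := by
      ext ω; by_cases h : b < X i ω <;> simp [hYR_def, h]
    rw [this]; exact hright i
  -- tail bounds
  have hTL := tail_bound P hm0 hm1 YL hYLmeas hYLindep hYL01 hpL
  have hTR := tail_bound P hm0 hm1 YR hYRmeas hYRindep hYR01 hpR
  -- event inclusions
  have hsubL : {ω | orderStat j (fun i => X i ω) < a} ⊆
      {ω | (N : ℝ) / 2 ≤ ∑ i, YL i ω} := by
    intro ω hω
    simp only [Set.mem_setOf_eq] at hω ⊢
    set z : Fin N → ℝ := fun i => X i ω with hz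
    set S : Set ℝ := {x : ℝ | j ≤ (Finset.univ.filter fun i => z i ≤ x).card} with hS
    have huniv : (Finset.univ : Finset (Fin N)).Nonempty := ⟨i0, Finset.mem_univ i0⟩
    have hSne : S.Nonempty := by
      refine ⟨Finset.univ.sup' huniv z, ?_⟩
      have hfil : (Finset.univ.filter fun i => z i ≤ Finset.univ.sup' huniv z)
          = Finset.univ := by
        apply Finset.filter_true_of_mem
        intro i _
        exact Finset.le_sup' z (Finset.mem_univ i)
      simp only [hS, Set.mem_setOf_eq, hfil, Finset.card_univ, Fintype.card_fin]
      exact hjN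
    have hlt : sInf S < a := hω
    obtain ⟨x, hxS, hxa⟩ := exists_lt_of_csInf_lt hSne hlt
    have hcard : j ≤ (Finset.univ.filter fun i => z i < a).card := by
      refine le_trans hxS (Finset.card_le_card ?_)
      intro i hi
      simp only [Finset.mem_filter] at hi ⊢
      exact ⟨hi.1, lt_of_le_of_lt hi.2 hxa⟩
    have hsum : (∑ i, YL i ω) = ((Finset.univ.filter fun i => z i < a).card : ℝ) := by
      simp [hYL_def, Finset.sum_boole, hz]
    rw [hsum]
    have h2j : N ≤ 2 * j := by omega
    have : (N : ℝ) ≤ 2 * j := by exact_mod_cast h2j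
    have hjc : (j : ℝ) ≤ ((Finset.univ.filter fun i => z i < a).card : ℝ) := by
      exact_mod_cast hcard
    linarith
  have hsubR : {ω | b < orderStat j (fun i => X i ω)} ⊆
      {ω | (N : ℝ) / 2 ≤ ∑ i, YR i ω} := by
    intro ω hω
    simp only [Set.mem_setOf_eq] at hω ⊢
    set z : Fin N → ℝ := fun i => X i ω with hz
    set S : Set ℝ := {x : ℝ | j ≤ (Finset.univ.filter fun i => z i ≤ x).card} with hS
    have hbdd : BddBelow S := by
      refine ⟨Finset.univ.inf' ⟨i0, Finset.mem_univ i0⟩ z, ?_⟩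
      intro x hx
      have hxcard : j ≤ (Finset.univ.filter fun i => z i ≤ x).card := hx
      have hpos : 0 < (Finset.univ.filter fun i => z i ≤ x).card := by omega
      obtain ⟨i, hi⟩ := Finset.card_pos.mp hpos
      simp only [Finset.mem_filter] at hi
      exact le_trans (Finset.inf'_le z (Finset.mem_univ i)) hi.2
    have hbS : b ∉ S := by
      intro hb
      have : sInf S ≤ b := csInf_le hbdd hb
      exact absurd hω (not_lt.2 this)
    have hcb : (Finset.univ.filter fun i => z i ≤ b).card < j := by
      by_contra h
      exact hbS (le_of_not_gt h)
    have hsplit : (Finset.univ.filter fun i => z i ≤ b).card +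
        (Finset.univ.filter fun i => ¬ z i ≤ b).card = N := by
      rw [Finset.card_filter_add_card_filter_not]
      simp
    have hcardR : N - (j - 1) ≤ (Finset.univ.filter fun i => ¬ z i ≤ b).card := by omega
    have hsum : (∑ i, YR i ω) = ((Finset.univ.filter fun i => ¬ z i ≤ b).card : ℝ) := by
      have : ∀ i, YR i ω = if ¬ z i ≤ b then (1 : ℝ) else 0 := by
        intro i
        simp [hYR_def, hz, not_le]
      simp only [this]
      simp [Finset.sum_boole]
    rw [hsum]
    have h2 : N ≤ 2 * (Finset.univ.filter fun i => ¬ z i ≤ b).card := by omega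
    have : (N : ℝ) ≤ 2 * ((Finset.univ.filter fun i => ¬ z i ≤ b).card : ℝ) := by
      exact_mod_cast h2
    linarith
  -- combine
  have hunion : {ω | orderStat j (fun i => X i ω) ∉ Set.Icc a b} ⊆
      {ω | (N : ℝ) / 2 ≤ ∑ i, YL i ω} ∪ {ω | (N : ℝ) / 2 ≤ ∑ i, YR i ω} := by
    intro ω hω
    simp only [Set.mem_setOf_eq, Set.mem_Icc, not_and_or, not_le] at hω
    rcases hω with h | h
    · exact Or.inl (hsubL h)
    · exact Or.inr (hsubR h)
  have hm1' : P {ω | orderStat j (fun i => X i ω) ∉ Set.Icc a b} ≤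
      P {ω | (N : ℝ) / 2 ≤ ∑ i, YL i ω} + P {ω | (N : ℝ) / 2 ≤ ∑ i, YR i ω} :=
    le_trans (measure_mono hunion) (measure_union_le _ _)
  have htop1 : P {ω | (N : ℝ) / 2 ≤ ∑ i, YL i ω} ≠ ⊤ := measure_ne_top _ _
  have htop2 : P {ω | (N : ℝ) / 2 ≤ ∑ i, YR i ω} ≠ ⊤ := measure_ne_top _ _
  have := ENNReal.toReal_mono (by simp [ENNReal.add_ne_top, htop1, htop2]) hm1'
  rw [ENNReal.toReal_add htop1 htop2] at this
  calc (P {ω | orderStat j (fun i => X i ω) ∉ Set.Icc a b}).toReal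
      ≤ (P {ω | (N : ℝ) / 2 ≤ ∑ i, YL i ω}).toReal +
        (P {ω | (N : ℝ) / 2 ≤ ∑ i, YR i ω}).toReal := this
    _ ≤ Real.exp (-(N * m ^ 2) / 2) + Real.exp (-(N * m ^ 2) / 2) := add_le_add hTL hTR
    _ = 2 * Real.exp (-(N * m ^ 2) / 2) := by ring
end
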